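/- arXiv:2201.06385 — 3 statements merged into one kernel-verified Lean document; each statement's English description precedes it below -/
import Mathlib

section
/- For a connected weighted graph with Laplacian Q, resistance matrix Ω, node resistance curvature vector p and all-ones vector u, the matrix identity Q·Ω = −2I + 2·p·uᵀ holds; in particular, for every pair of distinct nodes i ≠ x one has 2p_i = k_i·ω_ix − Σ_{j∼i} c_ij·ω_jx. -/
open Matrix

variable {V : Type*}

/- The weighted Laplacian matrix of a weighted graph `(V, G, c)`:
`Q i i = ∑_{k ∼ i} c i k`, `Q i j = -c i j` for links `i ∼ j`, and `0` otherwise. -/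
open Classical in
noncomputable def lapMatrix [Fintype V] (G : SimpleGraph V) (c : V → V → ℝ) :
    Matrix V V ℝ :=
  Matrix.of fun i j =>
    if i = j then ∑ k, if G.Adj i k then c i k else 0
    else if G.Adj i j then -c i j else 0

/- The four Penrose equations characterizing the Moore–Penrose pseudoinverse. -/
def IsMoorePenroseInv [Fintype V] (Q Qd : Matrix V V ℝ) : Prop :=
  Q * Qd * Q = Q ∧ Qd * Q * Qd = Qd ∧ (Q * Qd)ᵀ = Q * Qd ∧ (Qd * Q)ᵀ = Qd * Q

/- The effective resistance `ω i j = (e_i - e_j)ᵀ Q† (e_i - e_j)`, computed from a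
pseudoinverse `Qd` of the Laplacian. -/
open Classical in
noncomputable def effRes [Fintype V] (Qd : Matrix V V ℝ) (i j : V) : ℝ :=
  (Pi.single i 1 - Pi.single j 1) ⬝ᵥ Qd *ᵥ (Pi.single i 1 - Pi.single j 1)

/- The node resistance curvature `p i = 1 - (1/2) ∑_{j ∼ i} c i j * ω i j`. -/
open Classical in
noncomputable def nodeCurv [Fintype V] (G : SimpleGraph V) (c : V → V → ℝ)
    (Qd : Matrix V V ℝ) (i : V) : ℝ :=
  1 - 1 / 2 * ∑ j, if G.Adj i j then c i j * effRes Qd i j else 0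

/- The resistance matrix `Ω` with entries `(Ω) i j = ω i j`. -/
noncomputable def resMatrix [Fintype V] (Qd : Matrix V V ℝ) : Matrix V V ℝ :=
  Matrix.of fun i j => effRes Qd i j

/-! Write `Q = D - A` with `A` the weighted adjacency matrix. For positive weights on a connected
graph a vector with `Q v = 0` is constant (maximum principle), so for symmetric `Q` both `Q Q†` and
`Q† Q` equal the projection `I - J / n`. Since `ω_ij = Q†_ii + Q†_jj - Q†_ij - Q†_ji`, we get
`Ω = δ uᵀ + u δᵀ - Q† - Q†ᵀ` with `δ = diag Q†`, and `Q u = 0` turns this into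
`Q Ω = (Q δ) uᵀ - Q Q† - Q† Q = -2 I + r uᵀ` for some vector `r`. The diagonal of `Q Ω`, where
`ω_ii = 0`, identifies `r` as `2 p`. -/

open Finset

theorem SimpleGraph.Reachable.of_forall_adj {G : SimpleGraph V} {p : V → Prop}
    (hp : ∀ x y, G.Adj x y → p x → p y) {u v : V} (h : G.Reachable u v) (hu : p u) : p v := by
  obtain ⟨w⟩ := h
  induction w with
  | nil => exact hu
  | cons hadj _ ih => exact ih (hp _ _ hadj hu)

section WeightedAdjacency

variable (G : SimpleGraph V) [DecidableRel G.Adj] (c : V → V → ℝ)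

def weightedAdjMatrix : Matrix V V ℝ :=
  of fun i j => if G.Adj i j then c i j else 0

theorem weightedAdjMatrix_transpose (hsymm : ∀ i j, c i j = c j i) :
    (weightedAdjMatrix G c)ᵀ = weightedAdjMatrix G c := by
  ext i j
  simp [weightedAdjMatrix, G.adj_comm, hsymm]

variable [Fintype V]

theorem weightedAdjMatrix_mulVec_one_apply (i : V) :
    (weightedAdjMatrix G c *ᵥ 1) i = ∑ j, if G.Adj i j then c i j else 0 := by
  simp [weightedAdjMatrix, mulVec, dotProduct]

theorem weightedAdjMatrix_mul_apply (M : Matrix V V ℝ) (i x : V) :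
    (weightedAdjMatrix G c * M) i x = ∑ j, if G.Adj i j then c i j * M j x else 0 := by
  simp [weightedAdjMatrix, mul_apply, ite_mul]

theorem lapMatrix_eq_diagonal_sub [DecidableEq V] :
    lapMatrix G c = diagonal (weightedAdjMatrix G c *ᵥ 1) - weightedAdjMatrix G c := by
  ext i j
  rw [Matrix.sub_apply, diagonal_apply, weightedAdjMatrix_mulVec_one_apply]
  by_cases hij : i = j
  · subst hij
    simp only [lapMatrix, weightedAdjMatrix, of_apply, if_true, G.irrefl, if_false, sub_zero]
    congr!
  · simp only [lapMatrix, weightedAdjMatrix, of_apply, if_neg hij, zero_sub]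
    split_ifs <;> simp

theorem lapMatrix_mul_apply (M : Matrix V V ℝ) (i x : V) :
    (lapMatrix G c * M) i x = (weightedAdjMatrix G c *ᵥ 1) i * M i x -
      (weightedAdjMatrix G c * M) i x := by
  classical
  rw [lapMatrix_eq_diagonal_sub, Matrix.sub_mul, Matrix.sub_apply, diagonal_mul]

theorem lapMatrix_mulVec_apply (v : V → ℝ) (i : V) :
    (lapMatrix G c *ᵥ v) i = ∑ j, weightedAdjMatrix G c i j * (v i - v j) := by
  classical
  rw [lapMatrix_eq_diagonal_sub, sub_mulVec, Pi.sub_apply, mulVec_diagonal]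
  simp [mulVec, dotProduct, mul_sub, sum_mul]

end WeightedAdjacency

section Laplacian

variable [Fintype V] (G : SimpleGraph V) (c : V → V → ℝ)

theorem lapMatrix_transpose (hsymm : ∀ i j, c i j = c j i) : (lapMatrix G c)ᵀ = lapMatrix G c := by
  classical
  rw [lapMatrix_eq_diagonal_sub, transpose_sub, diagonal_transpose,
    weightedAdjMatrix_transpose G c hsymm]

theorem lapMatrix_mulVec_one : lapMatrix G c *ᵥ 1 = 0 := by
  classical
  ext i
  simp [lapMatrix_mulVec_apply]

theorem one_vecMul_lapMatrix (hsymm : ∀ i j, c i j = c j i) : 1 ᵥ* lapMatrix G c = 0 := by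
  rw [← mulVec_transpose, lapMatrix_transpose G c hsymm, lapMatrix_mulVec_one]

variable {G c}

/-- Maximum principle: `v` attains its maximum at every neighbour of a maximum point. -/
theorem apply_eq_of_lapMatrix_mulVec_eq_zero (hpos : ∀ i j, G.Adj i j → 0 < c i j)
    (hconn : G.Connected) {v : V → ℝ} (hv : lapMatrix G c *ᵥ v = 0) (a b : V) : v a = v b := by
  classical
  have := hconn.nonempty
  obtain ⟨m, hm⟩ := Finite.exists_max v
  have hmax : ∀ x y, G.Adj x y → v x = v m → v y = v m := by
    intro x y hxy hx
    have hterm : ∀ j ∈ univ, 0 ≤ weightedAdjMatrix G c x j * (v x - v j) := by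
      intro j _
      refine mul_nonneg ?_ (by linarith [hm j])
      by_cases hxj : G.Adj x j
      · simpa [weightedAdjMatrix, hxj] using (hpos x j hxj).le
      · simp [weightedAdjMatrix, hxj]
    have hxy0 := (sum_eq_zero_iff_of_nonneg hterm).1
      (by rw [← lapMatrix_mulVec_apply, hv, Pi.zero_apply]) y (mem_univ y)
    simp only [weightedAdjMatrix, of_apply, if_pos hxy, mul_eq_zero, (hpos x y hxy).ne',
      false_or] at hxy0
    linarith
  have hall : ∀ z, v z = v m := fun z => (hconn.preconnected m z).of_forall_adj hmax rfl
  rw [hall a, hall b]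

theorem eq_one_sub_of_lapMatrix_mul_eq [DecidableEq V] (hpos : ∀ i j, G.Adj i j → 0 < c i j)
    (hconn : G.Connected) {P : Matrix V V ℝ} (hQP : lapMatrix G c * P = lapMatrix G c)
    (hP : 1 ᵥ* P = 0) : P = 1 - (Fintype.card V : ℝ)⁻¹ • of fun _ _ => 1 := by
  ext a x
  set w : V → ℝ := fun b => (P - 1) b x with hw_def
  have hw : lapMatrix G c *ᵥ w = 0 := by
    funext i
    change (lapMatrix G c * (P - 1)) i x = 0
    rw [Matrix.mul_sub, hQP, Matrix.mul_one, sub_self, Matrix.zero_apply]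
  have hsum : ∑ b, w b = -1 := by
    have hcol : ∑ b, P b x = 0 := by simpa [vecMul, dotProduct] using congrFun hP x
    simp [hw_def, sum_sub_distrib, hcol, one_apply]
  rw [sum_congr rfl fun b _ => apply_eq_of_lapMatrix_mulVec_eq_zero hpos hconn hw b a, sum_const,
    card_univ, nsmul_eq_mul] at hsum
  have : Nonempty V := ⟨a⟩
  have hn : (Fintype.card V : ℝ) ≠ 0 := Nat.cast_ne_zero.2 Fintype.card_ne_zero
  simp only [hw_def, Matrix.sub_apply, Matrix.smul_apply, of_apply, smul_eq_mul, mul_one] at hsum ⊢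
  rw [← eq_inv_mul_iff_mul_eq₀ hn] at hsum
  linarith

end Laplacian

section Resistance

variable [Fintype V] (Qd : Matrix V V ℝ)

theorem effRes_eq (a b : V) : effRes Qd a b = Qd a a + Qd b b - Qd a b - Qd b a := by
  classical
  simp only [effRes, mulVec_sub, mulVec_single, MulOpposite.op_one, one_smul, dotProduct_sub,
    sub_dotProduct, single_dotProduct, col_apply, one_mul]
  ring

theorem effRes_self (a : V) : effRes Qd a a = 0 := by
  rw [effRes_eq]
  ring

theorem effRes_comm (a b : V) : effRes Qd a b = effRes Qd b a := by
  rw [effRes_eq, effRes_eq]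
  ring

theorem resMatrix_eq :
    resMatrix Qd = vecMulVec (diag Qd) 1 + vecMulVec 1 (diag Qd) - Qd - Qdᵀ := by
  ext a b
  simp [resMatrix, effRes_eq]

theorem two_mul_nodeCurv (G : SimpleGraph V) (c : V → V → ℝ) (i : V) :
    2 * nodeCurv G c Qd i = 2 + (lapMatrix G c * resMatrix Qd) i i := by
  classical
  rw [lapMatrix_mul_apply, weightedAdjMatrix_mul_apply]
  simp only [nodeCurv, resMatrix, of_apply, effRes_self, mul_zero, zero_sub]
  rw [sum_congr rfl fun j _ => by rw [effRes_comm]]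
  ring

end Resistance

namespace IsMoorePenroseInv

variable [Fintype V] {Q Qd : Matrix V V ℝ}

theorem mul_mul_self_right (h : IsMoorePenroseInv Q Qd) (hQ : Qᵀ = Q) : Q * (Q * Qd) = Q := by
  simpa only [transpose_mul, h.2.2.1, hQ] using congrArg transpose h.1

theorem mul_mul_self_left (h : IsMoorePenroseInv Q Qd) : Q * (Qd * Q) = Q := by
  rw [← Matrix.mul_assoc, h.1]

theorem mul_eq_mul_transpose (h : IsMoorePenroseInv Q Qd) (hQ : Qᵀ = Q) : Qd * Q = Q * Qdᵀ := by
  rw [← h.2.2.2, transpose_mul, hQ]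

end IsMoorePenroseInv

theorem exists_lapMatrix_mul_resMatrix_eq [Fintype V] [DecidableEq V] {G : SimpleGraph V}
    {c : V → V → ℝ} (hsymm : ∀ i j, c i j = c j i) (hpos : ∀ i j, G.Adj i j → 0 < c i j)
    (hconn : G.Connected) {Qd : Matrix V V ℝ} (hQd : IsMoorePenroseInv (lapMatrix G c) Qd) :
    ∃ r : V → ℝ, lapMatrix G c * resMatrix Qd = (-2 : ℝ) • 1 + vecMulVec r 1 := by
  have hQT := lapMatrix_transpose G c hsymm
  have h1Q := one_vecMul_lapMatrix G c hsymm
  have hQQd := eq_one_sub_of_lapMatrix_mul_eq hpos hconn (hQd.mul_mul_self_right hQT)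
    (by rw [← vecMul_vecMul, h1Q, zero_vecMul])
  have hQdQ := eq_one_sub_of_lapMatrix_mul_eq hpos hconn hQd.mul_mul_self_left
    (by rw [hQd.mul_eq_mul_transpose hQT, ← vecMul_vecMul, h1Q, zero_vecMul])
  refine ⟨lapMatrix G c *ᵥ diag Qd + fun _ => 2 * (Fintype.card V : ℝ)⁻¹, ?_⟩
  rw [resMatrix_eq, Matrix.mul_sub, Matrix.mul_sub, Matrix.mul_add, mul_vecMulVec, mul_vecMulVec,
    lapMatrix_mulVec_one, ← hQd.mul_eq_mul_transpose hQT, hQQd, hQdQ]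
  ext i x
  simp only [Matrix.add_apply, Matrix.sub_apply, Matrix.smul_apply, vecMulVec_apply, one_apply,
    zero_vecMulVec, Matrix.zero_apply, of_apply, Pi.add_apply, Pi.one_apply, smul_eq_mul]
  split_ifs <;> ring

theorem lap_mul_resMatrix
    [Fintype V] [DecidableEq V] (G : SimpleGraph V) [DecidableRel G.Adj]
    (c : V → V → ℝ) (hsymm : ∀ i j, c i j = c j i)
    (hpos : ∀ i j, G.Adj i j → 0 < c i j)
    (hconn : G.Connected)
    (Qd : Matrix V V ℝ) (hQd : IsMoorePenroseInv (lapMatrix G c) Qd) :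
    lapMatrix G c * resMatrix Qd =
      (-2 : ℝ) • (1 : Matrix V V ℝ) +
        (2 : ℝ) • Matrix.vecMulVec (fun i => nodeCurv G c Qd i) (fun _ => (1 : ℝ)) ∧
    ∀ i x : V, i ≠ x →
      2 * nodeCurv G c Qd i =
        (∑ j, if G.Adj i j then c i j else 0) * effRes Qd i x -
          ∑ j, if G.Adj i j then c i j * effRes Qd j x else 0 := by
  obtain ⟨r, hr⟩ := exists_lapMatrix_mul_resMatrix_eq hsymm hpos hconn hQd
  -- the diagonal of `Q Ω` identifies the row vector `r`
  have hr_eq : r = (2 : ℝ) • fun i => nodeCurv G c Qd i := by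
    funext i
    have hii := congrFun₂ hr i i
    simp only [Matrix.add_apply, Matrix.smul_apply, one_apply_eq, vecMulVec_apply, Pi.one_apply,
      smul_eq_mul, mul_one] at hii
    rw [Pi.smul_apply, smul_eq_mul, two_mul_nodeCurv, hii]
    ring
  have hmain : lapMatrix G c * resMatrix Qd =
      (-2 : ℝ) • (1 : Matrix V V ℝ) + (2 : ℝ) • vecMulVec (fun i => nodeCurv G c Qd i) 1 := by
    rw [hr, hr_eq, smul_vecMulVec]
  refine ⟨hmain, fun i x hix => ?_⟩
  have hix' := congrFun₂ hmain i x
  rw [lapMatrix_mul_apply, weightedAdjMatrix_mulVec_one_apply, weightedAdjMatrix_mul_apply] at hix'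
  simp only [Matrix.add_apply, Matrix.smul_apply, one_apply_ne hix, vecMulVec_apply, Pi.one_apply,
    smul_eq_mul, mul_one, mul_zero, zero_add, resMatrix, of_apply] at hix'
  linarith
end

section
/- Let G be a finite connected weighted graph on n nodes and m links with all link weights equal to a constant c > 0. (i) If G is node transitive (for every two nodes i, j there exists a graph automorphism π of G with π(i) = j), then every node has constant node resistance curvature p_i = 1/n. (ii) If G is moreover link transitive (for every two links there is an automorphism mapping one to the other), then every link has constant link resistance curvature κ_ij = 2cρ, where ρ := m/(n(n−1)/2) is the link density. -/
open Matrix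

variable {V : Type*}

/- The link resistance curvature `κ i j = 2 (p i + p j) / ω i j`. -/
noncomputable def linkCurv [Fintype V] (G : SimpleGraph V) (c : V → V → ℝ)
    (Qd : Matrix V V ℝ) (i j : V) : ℝ :=
  2 * (nodeCurv G c Qd i + nodeCurv G c Qd j) / effRes Qd i j

/-- Uniqueness of the Moore–Penrose pseudoinverse. -/
lemma penrose_unique [Fintype V] {Q B C : Matrix V V ℝ}
    (hB : IsMoorePenroseInv Q B) (hC : IsMoorePenroseInv Q C) : B = C := by
  obtain ⟨hB1, hB2, hB3, hB4⟩ := hB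
  obtain ⟨hC1, hC2, hC3, hC4⟩ := hC
  have h1 : Q * B = Q * C := by
    calc Q * B = (Q * B)ᵀ := hB3.symm
    _ = Bᵀ * Qᵀ := transpose_mul _ _
    _ = Bᵀ * (Q * C * Q)ᵀ := by rw [hC1]
    _ = Bᵀ * (Qᵀ * (Q * C)ᵀ) := by rw [transpose_mul]
    _ = (Bᵀ * Qᵀ) * (Q * C)ᵀ := by rw [Matrix.mul_assoc]
    _ = (Q * B)ᵀ * (Q * C)ᵀ := by rw [← transpose_mul Q B]
    _ = (Q * B) * (Q * C) := by rw [hB3, hC3]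
    _ = (Q * B * Q) * C := by simp only [Matrix.mul_assoc]
    _ = Q * C := by rw [hB1]
  have h2 : B * Q = C * Q := by
    calc B * Q = (B * Q)ᵀ := hB4.symm
    _ = Qᵀ * Bᵀ := transpose_mul _ _
    _ = (Q * (C * Q))ᵀ * Bᵀ := by rw [← Matrix.mul_assoc, hC1]
    _ = ((C * Q)ᵀ * Qᵀ) * Bᵀ := by rw [transpose_mul]
    _ = (C * Q)ᵀ * (Qᵀ * Bᵀ) := by rw [Matrix.mul_assoc]
    _ = (C * Q)ᵀ * (B * Q)ᵀ := by rw [← transpose_mul B Q]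
    _ = (C * Q) * (B * Q) := by rw [hC4, hB4]
    _ = C * (Q * B * Q) := by simp only [Matrix.mul_assoc]
    _ = C * Q := by rw [hB1]
  calc B = B * Q * B := hB2.symm
  _ = C * Q * B := by rw [h2]
  _ = C * (Q * B) := Matrix.mul_assoc _ _ _
  _ = C * (Q * C) := by rw [h1]
  _ = C * Q * C := (Matrix.mul_assoc _ _ _).symm
  _ = C := hC2

lemma effRes_eq_s18 [Fintype V] [DecidableEq V] (Qd : Matrix V V ℝ) (i j : V) :
    effRes Qd i j = Qd i i + Qd j j - Qd i j - Qd j i := by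
  simp [effRes, sub_dotProduct, Matrix.mulVec_sub, Matrix.mulVec_single,
    single_dotProduct, dotProduct_sub]
  ring

lemma nodeCurv_eq [Fintype V] [DecidableEq V] (G : SimpleGraph V) [DecidableRel G.Adj]
    (c : V → V → ℝ) (Qd : Matrix V V ℝ) (i : V) :
    nodeCurv G c Qd i = 1 - 1 / 2 * ∑ j, if G.Adj i j then c i j * effRes Qd i j else 0 := by
  unfold nodeCurv
  congr 1
  congr 1
  refine Finset.sum_congr rfl fun j _ => ?_
  by_cases h : G.Adj i j <;> simp [h]

lemma lapMatrix_eq [Fintype V] [DecidableEq V] (G : SimpleGraph V) [DecidableRel G.Adj] (cw : ℝ) :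
    lapMatrix G (fun _ _ => cw) = cw • G.lapMatrix ℝ := by
  ext i j
  simp only [lapMatrix, of_apply, SimpleGraph.lapMatrix, Matrix.sub_apply, Matrix.smul_apply,
    SimpleGraph.degMatrix, SimpleGraph.adjMatrix, of_apply, smul_eq_mul]
  by_cases h : i = j
  · subst h
    simp [Matrix.diagonal_apply_eq, G.irrefl, Finset.mul_sum, mul_ite]
    rw [SimpleGraph.degree_eq_sum_if_adj G i, Finset.mul_sum]
    simp [mul_ite]
  · simp [h, mul_ite]
    split <;> simp [mul_comm]

/- STATEMENT 18: in a finite connected graph with constant link weight `cw`: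
(i) node transitivity implies constant node resistance curvature `p_i = 1/n`;
(ii) if moreover the graph is link transitive, every link has link resistance
curvature `κ = 2 cw ρ` with link density `ρ = m / (n(n-1)/2)`. -/
theorem transitive_graph_curvatures
    [Fintype V] [DecidableEq V] (G : SimpleGraph V) [DecidableRel G.Adj]
    (hconn : G.Connected) (cw : ℝ) (hcw : 0 < cw)
    (Qd : Matrix V V ℝ) (hQd : IsMoorePenroseInv (lapMatrix G fun _ _ => cw) Qd)
    (hnode : ∀ i j : V, ∃ π : G ≃g G, π i = j) :
    (∀ i : V, nodeCurv G (fun _ _ => cw) Qd i = 1 / (Fintype.card V : ℝ)) ∧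
    ((∀ i j x y : V, G.Adj i j → G.Adj x y → ∃ π : G ≃g G, s(π i, π j) = s(x, y)) →
      ∀ i j : V, G.Adj i j →
        linkCurv G (fun _ _ => cw) Qd i j =
          2 * cw * ((G.edgeFinset.card : ℝ) /
            ((Fintype.card V : ℝ) * ((Fintype.card V : ℝ) - 1) / 2))) := by

  classical
  have hne : Nonempty V := hconn.nonempty
  obtain ⟨hQd1, hQd2, hQd3, hQd4⟩ := hQd
  set Q : Matrix V V ℝ := lapMatrix G (fun _ _ => cw) with hQdef
  have hQdMP : IsMoorePenroseInv Q Qd := ⟨hQd1, hQd2, hQd3, hQd4⟩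
  have hcard : (0:ℝ) < (Fintype.card V : ℝ) := by exact_mod_cast Fintype.card_pos
  have hQsymm : Qᵀ = Q := by
    rw [hQdef, lapMatrix_eq, Matrix.transpose_smul, (G.isSymm_lapMatrix (R := ℝ))]
  have hQdsymm : Qdᵀ = Qd := by
    refine penrose_unique (Q := Q) ⟨?_, ?_, ?_, ?_⟩ hQdMP
    · have := congrArg Matrix.transpose hQd1
      simpa [transpose_mul, Matrix.mul_assoc, hQsymm] using this
    · have := congrArg Matrix.transpose hQd2
      simpa [transpose_mul, Matrix.mul_assoc, hQsymm] using this
    · have h : Q * Qdᵀ = Qd * Q := by rw [← hQd4, transpose_mul, hQsymm]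
      rw [h]; exact hQd4
    · have h : Qdᵀ * Q = Q * Qd := by rw [← hQd3, transpose_mul, hQsymm]
      rw [h]; exact hQd3
  have hQdQ : Q * Qd = Qd * Q := by
    calc Q * Qd = (Q * Qd)ᵀ := hQd3.symm
    _ = Qdᵀ * Qᵀ := transpose_mul _ _
    _ = Qd * Q := by rw [hQdsymm, hQsymm]
  have hrow : Q *ᵥ (fun _ => (1:ℝ)) = 0 := by
    rw [hQdef, lapMatrix_eq, Matrix.smul_mulVec,
      SimpleGraph.lapMatrix_mulVec_const_eq_zero, smul_zero]
  have hker : ∀ x : V → ℝ, Q *ᵥ x = 0 → ∀ a b : V, x a = x b := by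
    intro x hx a b
    rw [hQdef, lapMatrix_eq, Matrix.smul_mulVec, smul_eq_zero] at hx
    have hL : G.lapMatrix ℝ *ᵥ x = 0 := hx.resolve_left (ne_of_gt hcw)
    have := (G.lapMatrix_mulVec_eq_zero_iff_forall_reachable (x := x)).mp
      (by exact hL)
    exact this a b (hconn.preconnected a b)
  have hPconst : (Qd * Q) *ᵥ (fun _ => (1:ℝ)) = 0 := by
    rw [← Matrix.mulVec_mulVec, hrow, Matrix.mulVec_zero]
  have hfix : ∀ y : V → ℝ, (∑ v, y v) = 0 → (Qd * Q) *ᵥ y = y := by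
    intro y hy
    have hQw : Q *ᵥ (y - (Qd * Q) *ᵥ y) = 0 := by
      rw [Matrix.mulVec_sub, Matrix.mulVec_mulVec, ← Matrix.mul_assoc, hQd1, sub_self]
    have hcw2 := hker _ hQw
    have hsumPy : ∑ v, ((Qd * Q) *ᵥ y) v = 0 := by
      have h1 : ∑ v, ((Qd * Q) *ᵥ y) v = (fun _ => (1:ℝ)) ⬝ᵥ ((Qd * Q) *ᵥ y) := by
        simp [dotProduct]
      have h2 : (fun _ => (1:ℝ)) ᵥ* (Qd * Q) = 0 := by
        rw [← hQd4, Matrix.vecMul_transpose, hPconst]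
      rw [h1, Matrix.dotProduct_mulVec, h2, zero_dotProduct]
    have hw0 : ∀ a, (y - (Qd * Q) *ᵥ y) a = 0 := by
      intro a
      have hsw : ∑ v, (y - (Qd * Q) *ᵥ y) v = 0 := by
        simp [Pi.sub_apply, Finset.sum_sub_distrib, hy, hsumPy]
      rw [Finset.sum_congr rfl (fun b _ => hcw2 b a), Finset.sum_const, nsmul_eq_mul] at hsw
      rcases mul_eq_zero.mp hsw with h | h
      · exact absurd h (by exact_mod_cast (Fintype.card_pos (α := V)).ne')
      · exact h
    have h := funext hw0
    have : y - (Qd * Q) *ᵥ y = 0 := h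
    have := sub_eq_zero.mp this
    exact this.symm
  have hPdiag : ∀ i j : V, (Qd * Q) i j =
      (if i = j then (1:ℝ) else 0) - 1/(Fintype.card V : ℝ) := by
    intro i j
    have hy : ∑ v, ((Pi.single j 1 - fun _ => 1/(Fintype.card V : ℝ)) : V → ℝ) v = 0 := by
      simp [Pi.sub_apply, Finset.sum_sub_distrib, Finset.sum_const, Pi.single_apply,
        nsmul_eq_mul]
    have h := hfix _ hy
    rw [Matrix.mulVec_sub] at h
    have hc : (Qd * Q) *ᵥ (fun _ => 1/(Fintype.card V:ℝ)) = 0 := by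
      have he : ((fun _ => 1/(Fintype.card V:ℝ)) : V → ℝ)
          = (1/(Fintype.card V:ℝ)) • (fun _ => (1:ℝ)) := by funext v; simp
      rw [he, Matrix.mulVec_smul, hPconst, smul_zero]
    rw [hc, sub_zero, Matrix.mulVec_single] at h
    have h2 := congrFun h i
    simp only [Pi.sub_apply, Pi.single_apply, mul_one] at h2
    simpa using h2
  have htrace : ∑ i, (Qd * Q) i i = (Fintype.card V : ℝ) - 1 := by
    rw [Finset.sum_congr rfl (fun i _ => hPdiag i i)]
    simp [Finset.sum_sub_distrib, Finset.sum_const, nsmul_eq_mul]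
  have hPii : ∀ i, (Q * Qd) i i = ∑ k, (if G.Adj i k then cw * (Qd i i - Qd k i) else 0) := by
    intro i
    rw [Matrix.mul_apply]
    have hstep : ∀ k, Q i k * Qd k i =
        (if i = k then (∑ l, if G.Adj i l then cw else 0) * Qd i i else 0)
          + (if G.Adj i k then -cw * Qd k i else 0) := by
      intro k
      by_cases hik : i = k
      · subst hik; simp [hQdef, lapMatrix, G.irrefl]
      · simp [hQdef, lapMatrix, hik, ite_mul, zero_mul]
    rw [Finset.sum_congr rfl (fun k _ => hstep k), Finset.sum_add_distrib,
      Finset.sum_ite_eq Finset.univ i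
        (fun _ => (∑ l, if G.Adj i l then cw else 0) * Qd i i),
      if_pos (Finset.mem_univ i), Finset.sum_mul]
    rw [← Finset.sum_add_distrib]
    apply Finset.sum_congr rfl
    intro k _
    split <;> ring
  have hFoster : ∑ i, ∑ j, (if G.Adj i j then cw * effRes Qd i j else 0)
      = 2 * ((Fintype.card V:ℝ) - 1) := by
    have hsplit : ∀ i j : V, (if G.Adj i j then cw * effRes Qd i j else 0) =
        (if G.Adj i j then cw * (Qd i i - Qd j i) else 0)
          + (if G.Adj i j then cw * (Qd j j - Qd i j) else 0) := by
      intro i j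
      split
      · rw [effRes_eq_s18]; ring
      · simp
    calc ∑ i, ∑ j, (if G.Adj i j then cw * effRes Qd i j else 0)
        = ∑ i, ∑ j, ((if G.Adj i j then cw * (Qd i i - Qd j i) else 0)
          + (if G.Adj i j then cw * (Qd j j - Qd i j) else 0)) := by
          exact Finset.sum_congr rfl fun i _ => Finset.sum_congr rfl fun j _ => hsplit i j
    _ = (∑ i, ∑ j, (if G.Adj i j then cw * (Qd i i - Qd j i) else 0))
          + ∑ i, ∑ j, (if G.Adj i j then cw * (Qd j j - Qd i j) else 0) := by
          rw [← Finset.sum_add_distrib]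
          exact Finset.sum_congr rfl fun i _ => Finset.sum_add_distrib
    _ = (∑ i, ∑ j, (if G.Adj i j then cw * (Qd i i - Qd j i) else 0))
          + ∑ j, ∑ i, (if G.Adj i j then cw * (Qd j j - Qd i j) else 0) := by
          congr 1
          exact Finset.sum_comm
    _ = (∑ i, ∑ j, (if G.Adj i j then cw * (Qd i i - Qd j i) else 0))
          + ∑ i, ∑ j, (if G.Adj i j then cw * (Qd i i - Qd j i) else 0) := by
          congr 1
          refine Finset.sum_congr rfl fun x _ => Finset.sum_congr rfl fun y _ => ?_
          by_cases h : G.Adj x y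
          · rw [if_pos h.symm, if_pos h]
          · rw [if_neg (fun hh => h hh.symm), if_neg h]
    _ = 2 * ∑ i, (Q * Qd) i i := by rw [Finset.sum_congr rfl (fun i _ => (hPii i).symm)]; ring
    _ = 2 * ((Fintype.card V:ℝ) - 1) := by rw [hQdQ]; rw [htrace]
  have hnodesum : ∑ i, nodeCurv G (fun _ _ => cw) Qd i = 1 := by
    simp only [nodeCurv_eq]
    rw [Finset.sum_sub_distrib, Finset.sum_const, ← Finset.mul_sum, hFoster, nsmul_eq_mul,
      Finset.card_univ]
    field_simp
    ring
  have hinvQ : ∀ π : G ≃g G, Q.submatrix π.toEquiv π.toEquiv = Q := by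
    intro π; ext a b
    simp only [Matrix.submatrix_apply, hQdef, lapMatrix, of_apply]
    by_cases hab : a = b
    · subst hab
      rw [if_pos rfl, if_pos rfl,
        ← Equiv.sum_comp π.toEquiv (fun k => if G.Adj (π.toEquiv a) k then cw else 0)]
      simp only [show ⇑π.toEquiv = ⇑π from rfl]
      refine Finset.sum_congr rfl fun k _ => ?_
      by_cases hadj : G.Adj a k
      · rw [if_pos, if_pos hadj]; exact π.map_adj_iff.mpr hadj
      · rw [if_neg, if_neg hadj]; exact fun h => hadj (π.map_adj_iff.mp h)
    · rw [if_neg (fun h => hab (π.toEquiv.injective h)), if_neg hab]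
      simp only [show ⇑π.toEquiv = ⇑π from rfl]
      by_cases hadj : G.Adj a b
      · rw [if_pos (π.map_adj_iff.mpr hadj), if_pos hadj]
      · rw [if_neg (fun h => hadj (π.map_adj_iff.mp h)), if_neg hadj]
  have hinvQd : ∀ (π : G ≃g G) (a b : V), Qd (π a) (π b) = Qd a b := by
    intro π a b
    have hs := hinvQ π
    have key : IsMoorePenroseInv Q (Qd.submatrix π.toEquiv π.toEquiv) := by
      refine ⟨?_, ?_, ?_, ?_⟩
      · conv_lhs => rw [← hs]
        rw [Matrix.submatrix_mul_equiv, Matrix.submatrix_mul_equiv, hQd1, hs]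
      · conv_lhs => rw [← hs]
        rw [Matrix.submatrix_mul_equiv, Matrix.submatrix_mul_equiv, hQd2]
      · conv_lhs => rw [← hs]
        conv_rhs => rw [← hs]
        rw [Matrix.submatrix_mul_equiv, Matrix.transpose_submatrix, hQd3]
      · conv_lhs => rw [← hs]
        conv_rhs => rw [← hs]
        rw [Matrix.submatrix_mul_equiv, Matrix.transpose_submatrix, hQd4]
    have heq := penrose_unique key hQdMP
    calc Qd (π a) (π b) = (Qd.submatrix π.toEquiv π.toEquiv) a b := rfl
    _ = Qd a b := by rw [heq]
  have heffinv : ∀ (π : G ≃g G) (a b : V), effRes Qd (π a) (π b) = effRes Qd a b := by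
    intro π a b
    rw [effRes_eq_s18, effRes_eq_s18, hinvQd, hinvQd, hinvQd, hinvQd]
  have hnodeinv : ∀ (π : G ≃g G) (i : V),
      nodeCurv G (fun _ _ => cw) Qd (π i) = nodeCurv G (fun _ _ => cw) Qd i := by
    intro π i
    rw [nodeCurv_eq, nodeCurv_eq]
    congr 1
    congr 1
    rw [← Equiv.sum_comp π.toEquiv
      (fun j => if G.Adj (π i) j then cw * effRes Qd (π i) j else 0)]
    simp only [show ⇑π.toEquiv = ⇑π from rfl]
    refine Finset.sum_congr rfl fun j _ => ?_
    by_cases hadj : G.Adj i j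
    · rw [if_pos (π.map_adj_iff.mpr hadj), if_pos hadj]
      rw [heffinv]
    · rw [if_neg (fun h => hadj (π.map_adj_iff.mp h)), if_neg hadj]
  have hpart1 : ∀ i : V, nodeCurv G (fun _ _ => cw) Qd i = 1 / (Fintype.card V : ℝ) := by
    intro i
    have hconst : ∀ a : V, nodeCurv G (fun _ _ => cw) Qd a = nodeCurv G (fun _ _ => cw) Qd i := by
      intro a
      obtain ⟨π, hπ⟩ := hnode i a
      rw [← hπ, hnodeinv]
    have h1 : (Fintype.card V : ℝ) * nodeCurv G (fun _ _ => cw) Qd i = 1 := by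
      rw [← hnodesum, Finset.sum_congr rfl (fun a _ => hconst a), Finset.sum_const,
        nsmul_eq_mul, Finset.card_univ]
    rw [eq_div_iff (ne_of_gt hcard)]
    linarith [h1]
  refine ⟨hpart1, ?_⟩
  intro hlink i j hadj
  set m : ℝ := (G.edgeFinset.card : ℝ) with hmdef
  set ω := effRes Qd i j with hω
  have hsym_eff : ∀ a b : V, effRes Qd a b = effRes Qd b a := by
    intro a b; rw [effRes_eq_s18, effRes_eq_s18]; ring
  have hedge : ∀ x y : V, G.Adj x y → effRes Qd x y = ω := by
    intro x y hxy
    obtain ⟨π, hπ⟩ := hlink x y i j hxy hadj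
    rw [Sym2.eq_iff] at hπ
    have h := heffinv π x y
    rcases hπ with ⟨h1, h2⟩ | ⟨h1, h2⟩
    · rw [h1, h2] at h; rw [← h, hω]
    · rw [h1, h2] at h; rw [← h, hω, hsym_eff]
  have hmem : s(i, j) ∈ G.edgeFinset := by
    rw [SimpleGraph.mem_edgeFinset]; exact hadj
  have hm : (0:ℝ) < (G.edgeFinset.card : ℝ) := by
    have : 0 < G.edgeFinset.card := Finset.card_pos.mpr ⟨_, hmem⟩
    exact_mod_cast this
  have hn2 : (2:ℝ) ≤ (Fintype.card V:ℝ) := by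
    have : 1 < Fintype.card V := Fintype.one_lt_card_iff_nontrivial.mpr ⟨⟨i, j, hadj.ne⟩⟩
    exact_mod_cast this
  have hcount : ∑ a, ∑ b, (if G.Adj a b then cw * effRes Qd a b else 0)
      = (∑ v, (G.degree v : ℝ)) * (cw * ω) := by
    rw [Finset.sum_mul]
    refine Finset.sum_congr rfl fun a _ => ?_
    rw [SimpleGraph.degree_eq_sum_if_adj G a, Finset.sum_mul]
    refine Finset.sum_congr rfl fun b _ => ?_
    by_cases h : G.Adj a b
    · rw [if_pos h, if_pos h, hedge a b h, one_mul]
    · rw [if_neg h, if_neg h, zero_mul]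
  have hdegsum : (∑ v, (G.degree v : ℝ)) = 2 * (G.edgeFinset.card : ℝ) := by
    have := G.sum_degrees_eq_twice_card_edges
    exact_mod_cast congrArg (fun n : ℕ => (n : ℝ)) this
  have hkey : (G.edgeFinset.card : ℝ) * (cw * ω) = (Fintype.card V:ℝ) - 1 := by
    have := hFoster
    rw [hcount, hdegsum] at this
    linarith
  have hω0 : ω ≠ 0 := by
    intro h
    rw [h] at hkey
    simp at hkey
    linarith
  unfold linkCurv
  rw [hpart1 i, hpart1 j, ← hω]
  have hn0 : (Fintype.card V:ℝ) ≠ 0 := by linarith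
  have hn1 : (Fintype.card V:ℝ) - 1 ≠ 0 := by linarith
  have hm0 : (G.edgeFinset.card : ℝ) ≠ 0 := ne_of_gt hm
  field_simp
  linear_combination (-2) * hkey
end

section
/- Let t ↦ Q(t) be a differentiable matrix-valued function on an open time interval such that for each t, Q(t) is the Laplacian of a connected weighted graph on n nodes, and suppose Q satisfies the flow equation dQ/dt = 2·Q·diag(p)·Q, where p = p(t) is the node resistance curvature vector of Q(t). Then the Moore–Penrose pseudoinverse satisfies dQ†/dt = −2·(I − uuᵀ/n)·diag(p)·(I − uuᵀ/n), and consequently the effective resistances evolve according to dω_ij/dt = −2(p_i + p_j) for all pairs of distinct nodes i ≠ j. -/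
open Matrix

variable {V : Type*}

/- The Moore–Penrose pseudoinverse of the Laplacian of a connected weighted graph,
via the formula `Q† = (Q + uuᵀ/n)⁻¹ − uuᵀ/n`. -/
noncomputable def lapPseudoInv [Fintype V] [DecidableEq V] (A : Matrix V V ℝ) :
    Matrix V V ℝ :=
  (A + ((Fintype.card V : ℝ))⁻¹ •
      Matrix.vecMulVec (fun _ => (1 : ℝ)) (fun _ => (1 : ℝ)))⁻¹ -
    ((Fintype.card V : ℝ))⁻¹ • Matrix.vecMulVec (fun _ => (1 : ℝ)) (fun _ => (1 : ℝ))

namespace RRFaux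

variable {V : Type*} [Fintype V] [DecidableEq V]

attribute [local instance] Matrix.linftyOpNormedRing Matrix.linftyOpNormedAlgebra

noncomputable scoped instance : CompleteSpace (Matrix V V ℝ) :=
  FiniteDimensional.complete ℝ (Matrix V V ℝ)

lemma hasDerivAt_matrix {f : ℝ → Matrix V V ℝ} {t : ℝ} {D : Matrix V V ℝ}
    (h : ∀ i j, HasDerivAt (fun τ => f τ i j) (D i j) t) : HasDerivAt f D t := by
  have key : HasDerivAt (fun τ => ∑ i : V, ∑ j : V, Matrix.single i j (f τ i j))
      (∑ i : V, ∑ j : V, Matrix.single i j (D i j)) t := by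
    refine HasDerivAt.fun_sum fun i _ => HasDerivAt.fun_sum fun j _ => ?_
    have e : (fun τ => Matrix.single i j (f τ i j)) =
        fun τ => (f τ i j) • Matrix.single i j (1:ℝ) := by
      funext τ; rw [Matrix.smul_single, smul_eq_mul, mul_one]
    rw [e, show Matrix.single i j (D i j) = (D i j) • Matrix.single i j (1:ℝ) by
      rw [Matrix.smul_single, smul_eq_mul, mul_one]]
    exact (h i j).smul_const _
  have e1 : f = fun τ => ∑ i : V, ∑ j : V, Matrix.single i j (f τ i j) :=
    funext fun τ => Matrix.matrix_eq_sum_single (f τ)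
  rw [e1, Matrix.matrix_eq_sum_single D]
  exact key

noncomputable def entryCLM (i j : V) : Matrix V V ℝ →L[ℝ] ℝ :=
  LinearMap.toContinuousLinearMap
    { toFun := fun A => A i j, map_add' := fun _ _ => rfl, map_smul' := fun _ _ => rfl }

lemma hasDerivAt_entry {f : ℝ → Matrix V V ℝ} {t : ℝ} {D : Matrix V V ℝ}
    (h : HasDerivAt f D t) (i j : V) : HasDerivAt (fun τ => f τ i j) (D i j) t :=
  ((entryCLM i j).hasFDerivAt.comp_hasDerivAt t h :)


variable {V : Type*} [Fintype V] [DecidableEq V]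

noncomputable def lapOf (c : V → V → ℝ) : Matrix V V ℝ :=
  Matrix.of fun i j : V => if i = j then ∑ k, c i k else -(c i j)

noncomputable def Jmat (V : Type*) [Fintype V] : Matrix V V ℝ :=
  ((Fintype.card V : ℝ))⁻¹ • Matrix.vecMulVec (fun _ => (1 : ℝ)) (fun _ => (1 : ℝ))

lemma lapOf_mulVec {c : V → V → ℝ} (hd : ∀ i, c i i = 0) (x : V → ℝ) (i : V) :
    (lapOf c *ᵥ x) i = (∑ k, c i k) * x i - ∑ j, c i j * x j := by
  simp only [lapOf, mulVec, dotProduct, of_apply]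
  rw [← Finset.add_sum_erase _ _ (Finset.mem_univ i), if_pos rfl]
  have h2 : ∑ j ∈ Finset.univ.erase i, (if i = j then (∑ k, c i k) else -(c i j)) * x j
      = ∑ j ∈ Finset.univ.erase i, -(c i j * x j) := by
    refine Finset.sum_congr rfl fun j hj => ?_
    rw [if_neg (Ne.symm (Finset.ne_of_mem_erase hj)), neg_mul]
  rw [h2, Finset.sum_neg_distrib, Finset.sum_erase_eq_sub (Finset.mem_univ i), hd i]
  ring

lemma lapOf_transpose {c : V → V → ℝ} (hc : ∀ i j, c i j = c j i) :
    (lapOf c)ᵀ = lapOf c := by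
  ext i j
  simp only [lapOf, transpose_apply, of_apply]
  rcases eq_or_ne i j with rfl | h
  · rfl
  · rw [if_neg h, if_neg (Ne.symm h), hc]

lemma quadForm {c : V → V → ℝ} (hc : ∀ i j, c i j = c j i) (hd : ∀ i, c i i = 0) (x : V → ℝ) :
    x ⬝ᵥ lapOf c *ᵥ x = (1 / 2) * ∑ i, ∑ j, c i j * (x i - x j) ^ 2 := by
  have h1 : x ⬝ᵥ lapOf c *ᵥ x
      = ∑ i, ∑ j, (c i j * (x i * x i) - c i j * (x i * x j)) := by
    simp only [dotProduct]
    refine Finset.sum_congr rfl fun i _ => ?_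
    rw [lapOf_mulVec hd x i, Finset.sum_sub_distrib, ← Finset.sum_mul,
      show ∑ j, c i j * (x i * x j) = x i * ∑ j, c i j * x j from by
        rw [Finset.mul_sum]; exact Finset.sum_congr rfl fun j _ => by ring]
    ring
  have h2 : ∑ i, ∑ j, c i j * (x j * x j) = ∑ i, ∑ j, c i j * (x i * x i) := by
    rw [Finset.sum_comm]
    exact Finset.sum_congr rfl fun i _ => Finset.sum_congr rfl fun j _ => by rw [hc]
  have h3 : ∑ i, ∑ j, c i j * (x i - x j) ^ 2
      = ∑ i, ∑ j, (c i j * (x i * x i) - 2 * (c i j * (x i * x j)) + c i j * (x j * x j)) :=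
    Finset.sum_congr rfl fun i _ => Finset.sum_congr rfl fun j _ => by ring
  simp only [h1, h3, Finset.sum_add_distrib, Finset.sum_sub_distrib, h2, ← Finset.mul_sum]
  ring




lemma isUnit_lap_add_J {c : V → V → ℝ} (hc : ∀ i j, c i j = c j i)
    (hnn : ∀ i j, 0 ≤ c i j) (hd : ∀ i, c i i = 0)
    (hconn : (SimpleGraph.fromRel fun i j : V => 0 < c i j).Connected) :
    IsUnit (lapOf c + Jmat V) := by
  haveI : Nonempty V := hconn.nonempty
  have hn : (0 : ℝ) < (Fintype.card V : ℝ) := by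
    exact_mod_cast Fintype.card_pos
  rw [← Matrix.mulVec_injective_iff_isUnit]
  suffices key : ∀ x : V → ℝ, (lapOf c + Jmat V) *ᵥ x = 0 → x = 0 by
    intro a b hab
    have := key (a - b) (by rw [Matrix.mulVec_sub, hab, sub_self])
    exact sub_eq_zero.1 this
  intro x hx
  have hquad : x ⬝ᵥ (lapOf c + Jmat V) *ᵥ x = 0 := by rw [hx]; simp
  rw [Matrix.add_mulVec, dotProduct_add, quadForm hc hd] at hquad
  have hJ : x ⬝ᵥ Jmat V *ᵥ x = (Fintype.card V : ℝ)⁻¹ * (∑ k, x k) ^ 2 := by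
    rw [Jmat, Matrix.smul_mulVec, dotProduct_smul, smul_eq_mul]
    congr 1
    simp only [Matrix.mulVec, dotProduct, Matrix.vecMulVec_apply, one_mul]
    rw [← Finset.sum_mul, sq]
  rw [hJ] at hquad
  have hS : (0:ℝ) ≤ ∑ i, ∑ j, c i j * (x i - x j) ^ 2 := by
    exact Finset.sum_nonneg fun i _ => Finset.sum_nonneg fun j _ =>
      mul_nonneg (hnn i j) (sq_nonneg _)
  have hT : (0:ℝ) ≤ (Fintype.card V : ℝ)⁻¹ * (∑ k, x k) ^ 2 := by positivity
  have hS0 : ∑ i, ∑ j, c i j * (x i - x j) ^ 2 = 0 := by nlinarith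
  have hT0 : ∑ k, x k = 0 := by
    have h1 : (Fintype.card V : ℝ)⁻¹ * (∑ k, x k) ^ 2 = 0 := by linarith
    have h2 : (∑ k, x k) ^ 2 = 0 := by
      rcases mul_eq_zero.1 h1 with h | h
      · exact absurd h (by positivity)
      · exact h
    exact pow_eq_zero_iff (by norm_num) |>.1 h2
  have hterm : ∀ i j : V, c i j * (x i - x j) ^ 2 = 0 := by
    intro i j
    have h1 := (Finset.sum_eq_zero_iff_of_nonneg
      (fun i _ => Finset.sum_nonneg fun j _ => mul_nonneg (hnn i j) (sq_nonneg _))).1 hS0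
      i (Finset.mem_univ i)
    exact (Finset.sum_eq_zero_iff_of_nonneg (fun j _ => mul_nonneg (hnn i j) (sq_nonneg _))).1
      h1 j (Finset.mem_univ j)
  have hedge : ∀ i j : V, 0 < c i j → x i = x j := by
    intro i j h
    rcases mul_eq_zero.1 (hterm i j) with h' | h'
    · exact absurd h' (ne_of_gt h)
    · have := pow_eq_zero_iff (n := 2) (by norm_num) |>.1 h'
      linarith [sub_eq_zero.1 this]
  have hconst : ∀ i j : V, x i = x j := by
    intro i j
    obtain ⟨w⟩ := hconn.preconnected i j
    induction w with
    | nil => rfl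
    | cons h w ih =>
      rw [SimpleGraph.fromRel_adj] at h
      rcases h.2 with h2 | h2
      · exact (hedge _ _ h2).trans ih
      · exact (hedge _ _ (by rw [hc]; exact h2)).trans ih
  funext i
  have : ∑ k, x k = (Fintype.card V : ℝ) * x i := by
    rw [Finset.sum_congr rfl fun k _ => hconst k i, Finset.sum_const, nsmul_eq_mul,
      Finset.card_univ]
  rw [hT0] at this
  have := this.symm
  rcases mul_eq_zero.1 this with h | h
  · exact absurd h (ne_of_gt hn)
  · exact h

lemma lapOf_row_sum {c : V → V → ℝ} (hd : ∀ i, c i i = 0) (i : V) :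
    ∑ j, lapOf c i j = 0 := by
  have h := lapOf_mulVec hd (fun _ => (1:ℝ)) i
  simp only [Matrix.mulVec, dotProduct, mul_one] at h
  rw [h]; ring

lemma lap_mul_vv {c : V → V → ℝ} (hd : ∀ i, c i i = 0) :
    lapOf c * Matrix.vecMulVec (fun _ => (1:ℝ)) (fun _ => (1:ℝ)) = 0 := by
  ext i j
  simp only [Matrix.mul_apply, Matrix.vecMulVec_apply, one_mul, mul_one, Matrix.zero_apply]
  exact lapOf_row_sum hd i

lemma vv_mul_lap {c : V → V → ℝ} (hc : ∀ i j, c i j = c j i) (hd : ∀ i, c i i = 0) :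
    Matrix.vecMulVec (fun _ => (1:ℝ)) (fun _ => (1:ℝ)) * lapOf c = 0 := by
  ext i j
  simp only [Matrix.mul_apply, Matrix.vecMulVec_apply, one_mul, mul_one, Matrix.zero_apply]
  have he : ∀ k : V, lapOf c k j = lapOf c j k := by
    intro k
    conv_lhs => rw [← lapOf_transpose hc, Matrix.transpose_apply]
  rw [Finset.sum_congr rfl fun k _ => he k]
  exact lapOf_row_sum hd j

lemma vv_mul_vv : (Matrix.vecMulVec (fun _ => (1:ℝ)) (fun _ => (1:ℝ)) :
    Matrix V V ℝ) * Matrix.vecMulVec (fun _ => (1:ℝ)) (fun _ => (1:ℝ))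
      = (Fintype.card V : ℝ) • Matrix.vecMulVec (fun _ => (1:ℝ)) (fun _ => (1:ℝ)) := by
  ext i j
  rw [Matrix.mul_apply, Matrix.smul_apply]
  simp [Matrix.vecMulVec_apply, Finset.card_univ, mul_comm]

lemma M_mul_one_sub_J [Nonempty V] {c : V → V → ℝ} (hc : ∀ i j, c i j = c j i)
    (hd : ∀ i, c i i = 0) :
    (lapOf c + Jmat V) * (1 - Jmat V) = lapOf c ∧
      (1 - Jmat V) * (lapOf c + Jmat V) = lapOf c := by
  have hn : (Fintype.card V : ℝ) ≠ 0 := by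
    exact_mod_cast Fintype.card_ne_zero
  have hQJ : lapOf c * Jmat V = 0 := by
    rw [Jmat, Matrix.mul_smul, lap_mul_vv hd, smul_zero]
  have hJQ : Jmat V * lapOf c = 0 := by
    rw [Jmat, Matrix.smul_mul, vv_mul_lap hc hd, smul_zero]
  have hJJ : Jmat V * Jmat V = Jmat V := by
    rw [Jmat, Matrix.smul_mul, Matrix.mul_smul, vv_mul_vv, smul_smul, smul_smul,
      mul_assoc, inv_mul_cancel₀ hn, mul_one]
  constructor
  · rw [add_mul, mul_sub, mul_sub, hQJ, hJJ, mul_one, mul_one]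
    abel
  · rw [mul_add, sub_mul, sub_mul, hJQ, hJJ, one_mul, one_mul]
    abel

lemma inv_identities [Nonempty V] {c : V → V → ℝ} (hc : ∀ i j, c i j = c j i)
    (hd : ∀ i, c i i = 0) (hU : IsUnit (lapOf c + Jmat V)) :
    (lapOf c + Jmat V)⁻¹ * lapOf c = 1 - Jmat V ∧
      lapOf c * (lapOf c + Jmat V)⁻¹ = 1 - Jmat V := by
  haveI := hU.invertible
  obtain ⟨h1, h2⟩ := M_mul_one_sub_J (V := V) hc hd
  constructor
  · have h3 : (lapOf c + Jmat V)⁻¹ * ((lapOf c + Jmat V) * (1 - Jmat V)) = 1 - Jmat V := by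
      rw [← Matrix.invOf_eq_nonsing_inv, invOf_mul_cancel_left]
    rwa [h1] at h3
  · have h3 : (1 - Jmat V) * (lapOf c + Jmat V) * (lapOf c + Jmat V)⁻¹ = 1 - Jmat V := by
      rw [← Matrix.invOf_eq_nonsing_inv, mul_invOf_cancel_right]
    rwa [h2] at h3


lemma hasDerivAt_effRes {f : ℝ → Matrix V V ℝ} {D : Matrix V V ℝ} {t : ℝ} (i j : V)
    (h : ∀ k l : V, HasDerivAt (fun τ => f τ k l) (D k l) t) :
    HasDerivAt (fun τ => effRes (f τ) i j) (effRes D i j) t := by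
  simp only [effRes, dotProduct, mulVec]
  exact HasDerivAt.fun_sum fun k _ =>
    (HasDerivAt.fun_sum fun l _ => (h k l).mul_const _).const_mul _

lemma lapPseudoInv_eq (A : Matrix V V ℝ) : lapPseudoInv A = (A + Jmat V)⁻¹ - Jmat V := rfl

lemma quad_entries (D : Matrix V V ℝ) {i j : V} (w : V → ℝ)
    (hw : ∀ k, w k = (if k = i then (1:ℝ) else 0) - (if k = j then 1 else 0)) (hij : i ≠ j) :
    w ⬝ᵥ D *ᵥ w = D i i - D i j - (D j i - D j j) := by
  have hin : ∀ k, (D *ᵥ w) k = D k i - D k j := by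
    intro k
    show ∑ l, D k l * w l = _
    have : ∀ l, D k l * w l
        = (if l = i then D k l else 0) - (if l = j then D k l else 0) := by
      intro l
      rw [hw l]
      by_cases h1 : l = i <;> by_cases h2 : l = j
      · exact absurd (h1.symm.trans h2) hij
      all_goals simp [h1, h2, hij, Ne.symm hij] <;> ring
    rw [Finset.sum_congr rfl fun l _ => this l]
    simp [Finset.sum_sub_distrib]
  show ∑ k, w k * (D *ᵥ w) k = _
  have : ∀ k, w k * (D *ᵥ w) k
      = (if k = i then D k i - D k j else 0) - (if k = j then D k i - D k j else 0) := by
    intro k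
    rw [hin k, hw k]
    by_cases h1 : k = i <;> by_cases h2 : k = j
    · exact absurd (h1.symm.trans h2) hij
    all_goals simp [h1, h2, hij, Ne.symm hij] <;> ring
  rw [Finset.sum_congr rfl fun k _ => this k]
  simp [Finset.sum_sub_distrib]

lemma effRes_entries (D : Matrix V V ℝ) (i j : V) (hij : i ≠ j) :
    effRes D i j = D i i - D i j - (D j i - D j j) := by
  simp only [effRes]
  refine quad_entries D _ (fun k => ?_) hij
  by_cases h1 : k = i <;> by_cases h2 : k = j <;> simp [h1, h2, Pi.single_apply]

end RRFaux

attribute [local instance] Matrix.linftyOpNormedRing Matrix.linftyOpNormedAlgebra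
open scoped RRFaux in
/- STATEMENT 19: along the resistance Ricci flow `dQ/dt = 2 Q diag(p) Q` of
Laplacians of connected weighted graphs, the pseudoinverse satisfies
`dQ†/dt = -2 (I - uuᵀ/n) diag(p) (I - uuᵀ/n)` and the effective resistances
evolve as `dω_ij/dt = -2 (p_i + p_j)` for all `i ≠ j`. -/
theorem resistance_ricci_flow
    [Fintype V] [DecidableEq V]
    (s : Set ℝ) (hs : IsOpen s)
    (c : ℝ → V → V → ℝ)
    (hsymm : ∀ t ∈ s, ∀ i j : V, c t i j = c t j i)
    (hnonneg : ∀ t ∈ s, ∀ i j : V, 0 ≤ c t i j)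
    (hdiag : ∀ t ∈ s, ∀ i : V, c t i i = 0)
    (hconn : ∀ t ∈ s, (SimpleGraph.fromRel fun i j : V => 0 < c t i j).Connected)
    (Q : ℝ → Matrix V V ℝ)
    (hQ : ∀ t ∈ s, Q t = Matrix.of fun i j : V =>
      if i = j then ∑ k, c t i k else -(c t i j))
    (p : ℝ → V → ℝ)
    (hp : ∀ t ∈ s, ∀ i : V,
      p t i = 1 - 1 / 2 * ∑ j, c t i j * effRes (lapPseudoInv (Q t)) i j)
    (hflow : ∀ t ∈ s, ∀ i j : V, HasDerivAt (fun τ => Q τ i j)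
      ((((2 : ℝ) • (Q t * Matrix.diagonal (p t) * Q t) : Matrix V V ℝ)) i j) t) :
    (∀ t ∈ s, ∀ i j : V, HasDerivAt (fun τ => lapPseudoInv (Q τ) i j)
      ((((-2 : ℝ) •
        (((1 : Matrix V V ℝ) - ((Fintype.card V : ℝ))⁻¹ •
            Matrix.vecMulVec (fun _ => (1 : ℝ)) (fun _ => (1 : ℝ))) *
          Matrix.diagonal (p t) *
          ((1 : Matrix V V ℝ) - ((Fintype.card V : ℝ))⁻¹ •
            Matrix.vecMulVec (fun _ => (1 : ℝ)) (fun _ => (1 : ℝ)))) : Matrix V V ℝ)) i j) t) ∧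
    (∀ t ∈ s, ∀ i j : V, i ≠ j →
      HasDerivAt (fun τ => effRes (lapPseudoInv (Q τ)) i j)
        (-2 * (p t i + p t j)) t) := by
  
  have part1 : ∀ t ∈ s, ∀ i j : V, HasDerivAt (fun τ => lapPseudoInv (Q τ) i j)
      ((((-2 : ℝ) • (((1 : Matrix V V ℝ) - RRFaux.Jmat V) * Matrix.diagonal (p t) *
        ((1 : Matrix V V ℝ) - RRFaux.Jmat V)) : Matrix V V ℝ)) i j) t := by
    intro t ht i j
    haveI : Nonempty V := (hconn t ht).nonempty
    have hQt : Q t = RRFaux.lapOf (c t) := hQ t ht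
    have hU : IsUnit (Q t + RRFaux.Jmat V) := by
      rw [hQt]
      exact RRFaux.isUnit_lap_add_J (hsymm t ht) (hnonneg t ht) (hdiag t ht) (hconn t ht)
    have hident : (Q t + RRFaux.Jmat V)⁻¹ * Q t = 1 - RRFaux.Jmat V ∧
        Q t * (Q t + RRFaux.Jmat V)⁻¹ = 1 - RRFaux.Jmat V := by
      rw [hQt]
      exact RRFaux.inv_identities (hsymm t ht) (hdiag t ht) (hQt ▸ hU)
    have hMd : HasDerivAt (fun τ => Q τ + RRFaux.Jmat V)
        ((2 : ℝ) • (Q t * Matrix.diagonal (p t) * Q t)) t := by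
      apply RRFaux.hasDerivAt_matrix
      intro k l
      exact (hflow t ht k l).add_const (RRFaux.Jmat V k l)
    have hUu : (hU.unit : Matrix V V ℝ) = Q t + RRFaux.Jmat V := hU.unit_spec
    have hUinv : ((hU.unit⁻¹ : (Matrix V V ℝ)ˣ) : Matrix V V ℝ)
        = (Q t + RRFaux.Jmat V)⁻¹ := by
      conv_rhs => rw [Matrix.nonsing_inv_eq_ringInverse, ← hUu]
      rw [Ring.inverse_unit]
    have hinv : HasDerivAt (fun τ => Ring.inverse (Q τ + RRFaux.Jmat V))
        (-((Q t + RRFaux.Jmat V)⁻¹ * ((2 : ℝ) • (Q t * Matrix.diagonal (p t) * Q t)) *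
          (Q t + RRFaux.Jmat V)⁻¹)) t := by
      have hf := hasFDerivAt_ringInverse (𝕜 := ℝ) hU.unit
      rw [hUu] at hf
      have hcomp := hf.comp_hasDerivAt t hMd
      exact hcomp.congr_deriv (by simp [ContinuousLinearMap.mulLeftRight_apply, hUinv])
    have hfun : (fun τ => Ring.inverse (Q τ + RRFaux.Jmat V))
        = fun τ => (Q τ + RRFaux.Jmat V)⁻¹ :=
      funext fun τ => (Matrix.nonsing_inv_eq_ringInverse _).symm
    rw [hfun] at hinv
    have hD : -((Q t + RRFaux.Jmat V)⁻¹ * ((2 : ℝ) • (Q t * Matrix.diagonal (p t) * Q t)) *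
          (Q t + RRFaux.Jmat V)⁻¹)
        = (-2 : ℝ) • (((1 : Matrix V V ℝ) - RRFaux.Jmat V) * Matrix.diagonal (p t) *
          ((1 : Matrix V V ℝ) - RRFaux.Jmat V)) := by
      have hassoc : (Q t + RRFaux.Jmat V)⁻¹ * (Q t * Matrix.diagonal (p t) * Q t) *
          (Q t + RRFaux.Jmat V)⁻¹
          = ((Q t + RRFaux.Jmat V)⁻¹ * Q t) * Matrix.diagonal (p t) *
            (Q t * (Q t + RRFaux.Jmat V)⁻¹) := by
        simp only [Matrix.mul_assoc]
      rw [Matrix.mul_smul, Matrix.smul_mul, hassoc, hident.1, hident.2, ← neg_smul]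
    rw [hD] at hinv
    have hsub := hinv.sub_const (RRFaux.Jmat V)
    have hent := RRFaux.hasDerivAt_entry hsub i j
    have hfun2 : (fun τ => ((Q τ + RRFaux.Jmat V)⁻¹ - RRFaux.Jmat V) i j)
        = fun τ => lapPseudoInv (Q τ) i j := by
      funext τ
      rw [RRFaux.lapPseudoInv_eq]
    rw [hfun2] at hent
    convert hent using 1
  refine ⟨fun t ht i j => part1 t ht i j, ?_⟩
  intro t ht i j hij
  haveI : Nonempty V := (hconn t ht).nonempty
  have h1 := fun k l => part1 t ht k l
  have hmain := RRFaux.hasDerivAt_effRes (f := fun τ => lapPseudoInv (Q τ)) i j h1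
  convert hmain using 1
  rw [RRFaux.effRes_entries _ _ _ hij]
  set Dg : Matrix V V ℝ := Matrix.diagonal (p t) with hDg
  set J : Matrix V V ℝ := RRFaux.Jmat V with hJdef
  set x : V → ℝ := fun k => (if k = i then (1:ℝ) else 0) - (if k = j then 1 else 0) with hxdef
  rw [← RRFaux.quad_entries _ x (fun k => rfl) hij]
  have hx0 : ∑ k, x k = 0 := by
    simp [hxdef, Finset.sum_sub_distrib]
  have hJx : J *ᵥ x = 0 := by
    funext k
    simp only [hJdef, RRFaux.Jmat, Matrix.smul_mulVec, Pi.smul_apply, smul_eq_mul,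
      Pi.zero_apply]
    rw [show (Matrix.vecMulVec (fun _ => (1:ℝ)) (fun _ => (1:ℝ)) *ᵥ x) k = ∑ l, x l by
      simp [Matrix.mulVec, dotProduct, Matrix.vecMulVec_apply]]
    rw [hx0, mul_zero]
  have hxJ : x ᵥ* J = 0 := by
    funext k
    simp only [hJdef, RRFaux.Jmat, Matrix.vecMul, dotProduct, Matrix.smul_apply,
      Matrix.vecMulVec_apply, smul_eq_mul, one_mul, mul_one, Pi.zero_apply]
    rw [← Finset.sum_mul, hx0, zero_mul]
  have step1 : (((1 : Matrix V V ℝ) - J) * Dg * ((1 : Matrix V V ℝ) - J)) *ᵥ x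
      = ((1 : Matrix V V ℝ) - J) *ᵥ (Dg *ᵥ x) := by
    have hCx : ((1 : Matrix V V ℝ) - J) *ᵥ x = x := by
      rw [Matrix.sub_mulVec, Matrix.one_mulVec, hJx, sub_zero]
    rw [← Matrix.mulVec_mulVec, hCx, ← Matrix.mulVec_mulVec]
  have hsm : ((-2 : ℝ) • (((1 : Matrix V V ℝ) - J) * Dg * ((1 : Matrix V V ℝ) - J))) *ᵥ x
      = (-2 : ℝ) • (((1 : Matrix V V ℝ) - J) *ᵥ (Dg *ᵥ x)) := by
    rw [Matrix.smul_mulVec, step1]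
  rw [hsm, dotProduct_smul, Matrix.dotProduct_mulVec, Matrix.vecMul_sub,
    Matrix.vecMul_one, hxJ, sub_zero]
  have hdgx : x ⬝ᵥ Dg *ᵥ x = p t i + p t j := by
    have hterm : ∀ k, x k * (Dg *ᵥ x) k
        = (if k = i then p t i else 0) + (if k = j then p t j else 0) := by
      intro k
      have hmv : (Dg *ᵥ x) k = p t k * x k := by
        simp [hDg, Matrix.mulVec_diagonal]
      rw [hmv, hxdef]
      by_cases h1 : k = i <;> by_cases h2 : k = j
      · exact absurd (h1 ▸ h2 ▸ rfl : i = j) (by simpa using hij)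
      · subst h1; simp [h2]
      · subst h2; simp [h1]
        try ring
      · simp [h1, h2]
    rw [show x ⬝ᵥ Dg *ᵥ x = ∑ k, x k * (Dg *ᵥ x) k from rfl]
    rw [Finset.sum_congr rfl fun k _ => hterm k]
    simp [Finset.sum_add_distrib]
  rw [hdgx, smul_eq_mul]
  try ring
end
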